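/- Let s ≥ 2 and N ≥ 1 be integers. For every nonnegative integer n, the number of partitions of n in which every part is not divisible by s and every part is at most sN equals the number of partitions of n in which every part is at most sN and every part that is at most N occurs at most s − 1 times. -/

import Mathlib

open PowerSeries Finset
open scoped Classical

noncomputable section GlaisherAux

variable {α : Type*}

/-- A convenience constructor for the power series whose coefficients indicate a subset. -/
def indicatorSeries (α : Type*) [Semiring α] (s : Set ℕ) : PowerSeries α :=
  PowerSeries.mk fun n => if n ∈ s then 1 else 0

theorem coeff_indicator (s : Set ℕ) [Semiring α] (n : ℕ) :
    coeff (R := α) n (indicatorSeries _ s) = if n ∈ s then 1 else 0 :=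
  coeff_mk _ _

theorem constantCoeff_indicator (s : Set ℕ) [Semiring α] :
    constantCoeff (R := α) (indicatorSeries _ s) = if 0 ∈ s then 1 else 0 :=
  rfl

theorem num_series' [Field α] (i : ℕ) :
    (1 - (X : PowerSeries α) ^ (i + 1))⁻¹ = indicatorSeries α {k | i + 1 ∣ k} := by
  rw [PowerSeries.inv_eq_iff_mul_eq_one]
  · ext n
    cases n with
    | zero => simp [mul_sub, zero_pow, constantCoeff_indicator]
    | succ n =>
      simp only [coeff_one, if_false, mul_sub, mul_one, coeff_indicator,
        LinearMap.map_sub, reduceCtorEq]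
      simp_rw [coeff_mul, coeff_X_pow, coeff_indicator, @boole_mul _ _ _ _]
      erw [@sum_ite _ _ _ _ _ (fun _ => Classical.propDecidable _), sum_ite]
      simp_rw [@filter_filter _ _ _ _ _, sum_const_zero, add_zero, sum_const, nsmul_eq_mul, mul_one,
        sub_eq_iff_eq_add, zero_add]
      symm
      split_ifs with h
      · suffices #{a ∈ antidiagonal (n + 1) | i + 1 ∣ a.fst ∧ a.snd = i + 1} = 1 by
          simp only [Set.mem_setOf_eq]; convert congr_arg ((↑) : ℕ → α) this; norm_cast
        rw [card_eq_one]
        cases' h with p hp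
        refine ⟨((i + 1) * (p - 1), i + 1), ?_⟩
        ext ⟨a₁, a₂⟩
        simp only [mem_filter, Prod.mk.injEq, Finset.HasAntidiagonal.mem_antidiagonal, mem_singleton]
        constructor
        · rintro ⟨a_left, ⟨a, rfl⟩, rfl⟩
          refine ⟨?_, rfl⟩
          rw [Nat.mul_sub_left_distrib, ← hp, ← a_left, mul_one, Nat.add_sub_cancel]
        · rintro ⟨rfl, rfl⟩
          match p with
          | 0 => rw [mul_zero] at hp; cases hp
          | p + 1 => rw [hp]; simp [mul_add]
      · suffices #{a ∈ antidiagonal (n + 1) | i + 1 ∣ a.fst ∧ a.snd = i + 1} = 0 by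
          simp only [Set.mem_setOf_eq]; convert congr_arg ((↑) : ℕ → α) this; norm_cast
        rw [card_eq_zero]
        apply eq_empty_of_forall_notMem
        simp only [Prod.forall, mem_filter, not_and, Finset.HasAntidiagonal.mem_antidiagonal]
        rintro _ h₁ h₂ ⟨a, rfl⟩ rfl
        apply h
        simp [← h₂]
  · simp [zero_pow]

-- The main workhorse of the partition theorem proof.
theorem partialGF_prop (α : Type*) [CommSemiring α] (n : ℕ) (s : Finset ℕ) (hs : ∀ i ∈ s, 0 < i)
    (c : ℕ → Set ℕ) (hc : ∀ i, i ∉ s → 0 ∈ c i) :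
    #{p : n.Partition | (∀ j, p.parts.count j ∈ c j) ∧ ∀ j ∈ p.parts, j ∈ s} =
      coeff (R := α) n (∏ i ∈ s, indicatorSeries α ((· * i) '' c i)) := by
  simp_rw [coeff_prod, coeff_indicator, prod_boole, sum_boole]
  apply congr_arg
  simp only [mem_univ, forall_true_left, not_and, not_forall, exists_prop,
    Set.mem_image, not_exists]
  set φ : (a : Nat.Partition n) →
    a ∈ filter (fun p ↦ (∀ (j : ℕ), Multiset.count j p.parts ∈ c j) ∧ ∀ j ∈ p.parts, j ∈ s) univ →
    ℕ →₀ ℕ := fun p _ => {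
      toFun := fun i => Multiset.count i p.parts • i
      support := Finset.filter (fun i => i ≠ 0) p.parts.toFinset
      mem_support_toFun := fun a => by
        simp only [smul_eq_mul, ne_eq, mul_eq_zero, Multiset.count_eq_zero]
        rw [not_or, not_not]
        simp only [Multiset.mem_toFinset, not_not, mem_filter] }
  refine Finset.card_bij φ ?_ ?_ ?_
  · intro a ha
    simp only [φ, not_forall, not_exists, not_and, exists_prop, mem_filter]
    rw [mem_finsuppAntidiag]
    dsimp only [ne_eq, smul_eq_mul, id_eq, eq_mpr_eq_cast, le_eq_subset, Finsupp.coe_mk]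
    simp only [mem_univ, forall_true_left, not_and, not_forall, exists_prop,
      mem_filter, true_and] at ha
    refine ⟨⟨?_, fun i ↦ ?_⟩, fun i _ ↦ ⟨a.parts.count i, ha.1 i, rfl⟩⟩
    · conv_rhs => simp [← a.parts_sum]
      rw [sum_multiset_count_of_subset _ s]
      · simp only [smul_eq_mul]
      · intro i
        simp only [Multiset.mem_toFinset, not_not, mem_filter]
        apply ha.2
    · simp only [ne_eq, Multiset.mem_toFinset, not_not, mem_filter, and_imp]
      exact fun hi _ ↦ ha.2 i hi
  · intro p₁ hp₁ p₂ hp₂ h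
    apply Nat.Partition.ext
    simp only [true_and, mem_univ, mem_filter] at hp₁ hp₂
    ext i
    simp only [φ, ne_eq, Multiset.mem_toFinset, not_not, smul_eq_mul, Finsupp.mk.injEq] at h
    by_cases hi : i = 0
    · rw [hi]
      rw [Multiset.count_eq_zero_of_notMem]
      · rw [Multiset.count_eq_zero_of_notMem]
        intro a; exact Nat.lt_irrefl 0 (hs 0 (hp₂.2 0 a))
      intro a; exact Nat.lt_irrefl 0 (hs 0 (hp₁.2 0 a))
    · rw [← mul_left_inj' hi]
      rw [funext_iff] at h
      exact h.2 i
  · simp only [φ, mem_filter, mem_finsuppAntidiag, mem_univ, exists_prop, true_and, and_assoc]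
    rintro f ⟨hf, hf₃, hf₄⟩
    have hf' : f ∈ finsuppAntidiag s n := mem_finsuppAntidiag.mpr ⟨hf, hf₃⟩
    simp only [mem_finsuppAntidiag] at hf'
    refine ⟨⟨∑ i ∈ s, Multiset.replicate (f i / i) i, ?_, ?_⟩, ?_, ?_, ?_⟩
    · intro i hi
      simp only [exists_prop, Multiset.mem_sum, mem_map, Function.Embedding.coeFn_mk] at hi
      rcases hi with ⟨t, ht, z⟩
      apply hs
      rwa [Multiset.eq_of_mem_replicate z]
    · simp_rw [Multiset.sum_sum, Multiset.sum_replicate, Nat.nsmul_eq_mul]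
      rw [← hf'.1]
      refine sum_congr rfl fun i hi => Nat.div_mul_cancel ?_
      rcases hf₄ i hi with ⟨w, _, hw₂⟩
      rw [← hw₂]
      exact dvd_mul_left _ _
    · intro i
      simp_rw [Multiset.count_sum', Multiset.count_replicate, sum_ite_eq']
      split_ifs with h
      · rcases hf₄ i h with ⟨w, hw₁, hw₂⟩
        rwa [← hw₂, Nat.mul_div_cancel _ (hs i h)]
      · exact hc _ h
    · intro i hi
      rw [Multiset.mem_sum] at hi
      rcases hi with ⟨j, hj₁, hj₂⟩
      rwa [Multiset.eq_of_mem_replicate hj₂]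
    · ext i
      simp_rw [Multiset.count_sum', Multiset.count_replicate, sum_ite_eq']
      simp only [ne_eq, Multiset.mem_toFinset, not_not, smul_eq_mul, ite_mul,
        zero_mul, Finsupp.coe_mk]
      split_ifs with h
      · apply Nat.div_mul_cancel
        rcases hf₄ i h with ⟨w, _, hw₂⟩
        apply Dvd.intro_left _ hw₂
      · apply symm
        rw [← Finsupp.notMem_support_iff]
        exact notMem_mono hf'.2 h

end GlaisherAux

open PowerSeries Finset
open scoped Classical

noncomputable section GlaisherAux2

theorem hconst (i : ℕ) (hi : 0 < i) :
    constantCoeff (R := ℚ) (1 - (X : PowerSeries ℚ) ^ i) ≠ 0 := by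
  simp [zero_pow hi.ne']

theorem num_series'' (i : ℕ) (hi : 0 < i) :
    (1 - (X : PowerSeries ℚ) ^ i)⁻¹ = indicatorSeries ℚ {k | i ∣ k} := by
  obtain ⟨j, rfl⟩ := Nat.exists_eq_succ_of_ne_zero hi.ne'
  exact num_series' j

theorem indicator_geom (i k : ℕ) (hi : 0 < i) :
    indicatorSeries ℚ ((· * i) '' {m | m < k}) = ∑ j ∈ range k, (X : PowerSeries ℚ) ^ (j * i) := by
  ext n
  rw [coeff_indicator, map_sum]
  simp_rw [coeff_X_pow]
  rw [Finset.sum_boole]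
  by_cases h : n ∈ (· * i) '' {m | m < k}
  · rw [if_pos h]
    obtain ⟨m, hm, rfl⟩ := h
    have : {j ∈ range k | m * i = j * i} = {m} := by
      ext j
      simp only [mem_filter, mem_range, mem_singleton]
      constructor
      · rintro ⟨-, hj⟩
        exact (Nat.eq_of_mul_eq_mul_right hi hj.symm)
      · rintro rfl; exact ⟨hm, rfl⟩
    rw [this]; simp
  · rw [if_neg h]
    have : {j ∈ range k | n = j * i} = ∅ := by
      ext j
      simp only [mem_filter, mem_range, notMem_empty, iff_false, not_and]
      intro hj hn
      exact h ⟨j, hj, hn.symm⟩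
    rw [this]; simp

theorem geom_closed (i k : ℕ) (hi : 0 < i) :
    (∑ j ∈ range k, (X : PowerSeries ℚ) ^ (j * i)) =
      (1 - X ^ (k * i)) * (1 - X ^ i)⁻¹ := by
  have h := geom_sum_mul ((X : PowerSeries ℚ) ^ i) k
  have h2 : (∑ j ∈ range k, (X : PowerSeries ℚ) ^ (j * i)) * (1 - X ^ i)
      = 1 - X ^ (k * i) := by
    simp_rw [mul_comm _ i, pow_mul]
    linear_combination -h
  calc (∑ j ∈ range k, (X : PowerSeries ℚ) ^ (j * i))
      = (∑ j ∈ range k, (X : PowerSeries ℚ) ^ (j * i)) * ((1 - X ^ i) * (1 - X ^ i)⁻¹) := by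
        rw [PowerSeries.mul_inv_cancel _ (hconst i hi), mul_one]
    _ = (1 - X ^ (k * i)) * (1 - X ^ i)⁻¹ := by rw [← mul_assoc, h2]

theorem prod_sdvd (s N : ℕ) (hs : 2 ≤ s) :
    (∏ i ∈ Ioc 0 N, (1 - (X : PowerSeries ℚ) ^ (s * i))) =
      ∏ i ∈ (Ioc 0 (s * N)).filter (fun i => s ∣ i), (1 - (X : PowerSeries ℚ) ^ i) := by
  have hs0 : 0 < s := by omega
  apply Finset.prod_nbij (fun i => s * i)
  · intro a ha
    simp only [mem_Ioc] at ha
    simp only [mem_filter, mem_Ioc]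
    exact ⟨⟨Nat.mul_pos hs0 ha.1, Nat.mul_le_mul_left s ha.2⟩, dvd_mul_right s a⟩
  · intro a ha b hb hab
    exact Nat.eq_of_mul_eq_mul_left hs0 hab
  · intro b hb
    simp only [mem_coe, mem_filter, mem_Ioc] at hb
    obtain ⟨⟨hb0, hbN⟩, c, rfl⟩ := hb
    refine (Set.mem_image _ _ _).mpr ⟨c, ?_, rfl⟩
    simp only [mem_coe, mem_Ioc]
    refine ⟨Nat.pos_of_ne_zero ?_, Nat.le_of_mul_le_mul_left hbN hs0⟩
    rintro rfl
    simp at hb0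
  · intros; rfl

theorem key_identity (s N : ℕ) (hs : 2 ≤ s) (hN : 1 ≤ N) :
    (∏ i ∈ (Ioc 0 (s * N)).filter (fun i => ¬ s ∣ i), (1 - (X : PowerSeries ℚ) ^ i)⁻¹) =
      (∏ i ∈ Ioc 0 N, ((1 - (X : PowerSeries ℚ) ^ (s * i)) * (1 - X ^ i)⁻¹)) *
        ∏ i ∈ Ioc N (s * N), (1 - (X : PowerSeries ℚ) ^ i)⁻¹ := by
  have hNsN : N ≤ s * N := Nat.le_mul_of_pos_left N (by omega)
  rw [prod_mul_distrib, mul_assoc, Finset.prod_Ioc_consecutive _ (Nat.zero_le N) hNsN]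
  rw [prod_sdvd s N hs]
  rw [← Finset.prod_filter_mul_prod_filter_not (Ioc 0 (s * N)) (fun i => s ∣ i)
    (fun i => (1 - (X : PowerSeries ℚ) ^ i)⁻¹)]
  rw [← mul_assoc, ← prod_mul_distrib]
  have : (∏ i ∈ (Ioc 0 (s * N)).filter (fun i => s ∣ i),
      ((1 - (X : PowerSeries ℚ) ^ i) * (1 - X ^ i)⁻¹)) = 1 := by
    apply Finset.prod_eq_one
    intro i hi
    simp only [mem_filter, mem_Ioc] at hi
    exact PowerSeries.mul_inv_cancel _ (hconst i hi.1.1)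
  rw [this, one_mul]

theorem count_lhs (s N n : ℕ) (hs : 2 ≤ s) (hN : 1 ≤ N) :
    (Nat.card {p : Nat.Partition n // ∀ i ∈ p.parts, ¬ s ∣ i ∧ i ≤ s * N} : ℚ) =
      coeff (R := ℚ) n (∏ i ∈ (Ioc 0 (s * N)).filter (fun i => ¬ s ∣ i),
        (1 - (X : PowerSeries ℚ) ^ i)⁻¹) := by
  rw [Nat.card_eq_fintype_card, Fintype.card_subtype]
  have hpos : ∀ i ∈ (Ioc 0 (s * N)).filter (fun i => ¬ s ∣ i), 0 < i := by
    intro i hi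
    simp only [mem_filter, mem_Ioc] at hi
    exact hi.1.1
  have h := partialGF_prop ℚ n ((Ioc 0 (s * N)).filter (fun i => ¬ s ∣ i)) hpos
    (fun _ => Set.univ) (fun _ _ => trivial)
  have hset : (univ.filter fun p : Nat.Partition n => ∀ i ∈ p.parts, ¬ s ∣ i ∧ i ≤ s * N) =
      (univ.filter fun p : Nat.Partition n =>
        (∀ j, p.parts.count j ∈ (Set.univ : Set ℕ)) ∧
        ∀ j ∈ p.parts, j ∈ (Ioc 0 (s * N)).filter (fun i => ¬ s ∣ i)) := by
    ext p
    simp only [mem_filter, mem_univ, true_and, Set.mem_univ, forall_const, mem_Ioc]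
    constructor
    · intro h
      exact fun j hj => ⟨⟨p.parts_pos hj, (h j hj).2⟩, (h j hj).1⟩
    · intro h i hi
      exact ⟨(h i hi).2, (h i hi).1.2⟩
  rw [hset]
  rw [h]
  congr 1
  apply Finset.prod_congr rfl
  intro i hi
  have himg : ((· * i) '' (Set.univ : Set ℕ)) = {k | i ∣ k} := by
    ext k
    simp only [Set.image_univ, Set.mem_range, Set.mem_setOf_eq]
    constructor
    · rintro ⟨m, rfl⟩; exact dvd_mul_left i m
    · rintro ⟨c, rfl⟩; exact ⟨c, mul_comm c i⟩
  show indicatorSeries ℚ ((· * i) '' (Set.univ : Set ℕ)) = _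
  rw [himg, num_series'' i (hpos i hi)]

theorem count_rhs (s N n : ℕ) (hs : 2 ≤ s) (hN : 1 ≤ N) :
    (Nat.card {p : Nat.Partition n //
        (∀ i ∈ p.parts, i ≤ s * N) ∧ ∀ i ∈ p.parts, i ≤ N → p.parts.count i ≤ s - 1} : ℚ) =
      coeff (R := ℚ) n ((∏ i ∈ Ioc 0 N, ((1 - (X : PowerSeries ℚ) ^ (s * i)) * (1 - X ^ i)⁻¹)) *
        ∏ i ∈ Ioc N (s * N), (1 - (X : PowerSeries ℚ) ^ i)⁻¹) := by
  have hNsN : N ≤ s * N := Nat.le_mul_of_pos_left N (by omega)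
  rw [Nat.card_eq_fintype_card, Fintype.card_subtype]
  have hpos : ∀ i ∈ Ioc 0 (s * N), 0 < i := by
    intro i hi; exact (mem_Ioc.mp hi).1
  have h := partialGF_prop ℚ n (Ioc 0 (s * N)) hpos
    (fun i => {m | i ≤ N → m ≤ s - 1}) (fun i _ => by simp)
  have hset : (univ.filter fun p : Nat.Partition n =>
      (∀ i ∈ p.parts, i ≤ s * N) ∧ ∀ i ∈ p.parts, i ≤ N → p.parts.count i ≤ s - 1) =
      (univ.filter fun p : Nat.Partition n =>
        (∀ j, p.parts.count j ∈ {m | j ≤ N → m ≤ s - 1}) ∧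
        ∀ j ∈ p.parts, j ∈ Ioc 0 (s * N)) := by
    ext p
    simp only [mem_filter, mem_univ, true_and, Set.mem_setOf_eq, mem_Ioc]
    constructor
    · rintro ⟨h1, h2⟩
      refine ⟨fun j hjN => ?_, fun j hj => ⟨p.parts_pos hj, h1 j hj⟩⟩
      by_cases hj : j ∈ p.parts
      · exact h2 j hj hjN
      · rw [Multiset.count_eq_zero_of_notMem hj]; omega
    · rintro ⟨h1, h2⟩
      exact ⟨fun i hi => (h2 i hi).2, fun i _ hiN => h1 i hiN⟩
  rw [hset]
  rw [h]
  congr 1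
  rw [← Finset.prod_Ioc_consecutive _ (Nat.zero_le N) hNsN]
  congr 1
  · apply Finset.prod_congr rfl
    intro i hi
    simp only [mem_Ioc] at hi
    have hcs : {m : ℕ | i ≤ N → m ≤ s - 1} = {m | m < s} := by
      ext m; simp only [Set.mem_setOf_eq]
      constructor
      · intro h; have := h hi.2; omega
      · intro h _; omega
    show indicatorSeries ℚ ((· * i) '' {m : ℕ | i ≤ N → m ≤ s - 1}) = _
    rw [hcs, indicator_geom i s hi.1, geom_closed i s hi.1, mul_comm s i]
  · apply Finset.prod_congr rfl
    intro i hi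
    simp only [mem_Ioc] at hi
    have hi0 : 0 < i := by omega
    have hcs : {m : ℕ | i ≤ N → m ≤ s - 1} = Set.univ := by
      ext m; simp only [Set.mem_setOf_eq, Set.mem_univ, iff_true]
      intro h; omega
    have himg : ((· * i) '' (Set.univ : Set ℕ)) = {k | i ∣ k} := by
      ext k
      simp only [Set.image_univ, Set.mem_range, Set.mem_setOf_eq]
      constructor
      · rintro ⟨m, rfl⟩; exact dvd_mul_left i m
      · rintro ⟨c, rfl⟩; exact ⟨c, mul_comm c i⟩
    show indicatorSeries ℚ ((· * i) '' {m : ℕ | i ≤ N → m ≤ s - 1}) = _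
    rw [hcs, himg, num_series'' i hi0]

end GlaisherAux2

/-- Finite version of Glaisher's partition identity: the number of partitions of `n`
into parts not divisible by `s`, each at most `s * N`, equals the number of partitions
of `n` into parts at most `s * N` in which every part at most `N` occurs at most
`s - 1` times. -/
theorem finite_glaisher (s N : ℕ) (hs : 2 ≤ s) (hN : 1 ≤ N) (n : ℕ) :
    Nat.card {p : Nat.Partition n // ∀ i ∈ p.parts, ¬ s ∣ i ∧ i ≤ s * N} =
    Nat.card {p : Nat.Partition n //
      (∀ i ∈ p.parts, i ≤ s * N) ∧ ∀ i ∈ p.parts, i ≤ N → p.parts.count i ≤ s - 1} := by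
  have h1 := count_lhs s N n hs hN
  have h2 := count_rhs s N n hs hN
  have := key_identity s N hs hN
  rw [this] at h1
  exact_mod_cast h1.trans h2.symm
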